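/- arXiv:2309.09145 — 5 statements merged into one kernel-verified Lean document; each statement's English description precedes it below -/
import Mathlib

section
/- For every integer ℓ ≥ 2, the set of real numbers a^(1/ℓ), where a ranges over integers a ≥ 2 that are ℓ-power-free, is linearly independent over the integers. That is, if a_1, ..., a_m are distinct ℓ-power-free integers ≥ 2 and c_1, ..., c_m are integers with c_1·a_1^(1/ℓ) + ... + c_m·a_m^(1/ℓ) = 0, then c_1 = ... = c_m = 0. -/
/-!
Fix `j` and divide the relation by `a_j ^ (1/l)`. The numbers `β_i = (a_i / a_j) ^ (1/l)` are
positive reals with `β_i ^ l ∈ ℚ`, irrational for `i ≠ j` because distinct power-`l` free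
integers have no rational `l`-th root as quotient. If `d` is the least positive exponent with
`β ^ d ∈ ℚ`, then `X ^ d - β ^ d` is irreducible over `ℚ` (Capelli; its exceptional case for
`4 ∣ d` is excluded by positivity, which is why a real embedding is carried through the induction),
so it is the minimal polynomial of `β`, and since `d ≥ 2` the trace of `β` vanishes in every
number field containing it. Taking the trace of `∑ c_i β_i = 0` in `ℚ(β_1, …, β_m)` leaves
`c_j · [ℚ(β_1, …, β_m) : ℚ] = 0`.
-/

/-- `a` is power-`l` free: whenever `a = b ^ l * c`, we have `b = 1`. -/
def PowerFree (l a : ℕ) : Prop := ∀ b c : ℕ, a = b ^ l * c → b = 1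

namespace PowerFree

variable {l a b : ℕ}

theorem ne_zero (h : PowerFree l a) : a ≠ 0 := by
  rintro rfl
  exact absurd (h 2 0 (mul_zero _).symm) (by norm_num)

theorem exponent_ne_zero (h : PowerFree l a) : l ≠ 0 := by
  rintro rfl
  exact absurd (h 2 a (by rw [pow_zero, one_mul])) (by norm_num)

theorem eq_of_pow_eq_div (ha : PowerFree l a) (hb : PowerFree l b) {r : ℚ}
    (h : r ^ l = a / b) : a = b := by
  set u := r.num.natAbs
  set v := r.den
  have hcop : u.Coprime v := r.reduced
  have hcross : u ^ l * b = a * v ^ l := by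
    have habs : ((u : ℚ) / v) ^ l = a / b := by
      rw [Nat.cast_natAbs, Int.cast_abs, ← abs_of_pos (a := (v : ℚ)) (by positivity), ← abs_div,
        Rat.num_div_den, pow_abs, h, abs_of_nonneg (by positivity)]
    rw [div_pow, div_eq_div_iff (by positivity) (by exact_mod_cast hb.ne_zero)] at habs
    exact_mod_cast habs
  obtain ⟨b', hb'⟩ : v ^ l ∣ b :=
    (hcop.symm.pow l l).dvd_of_dvd_mul_left ⟨a, by rw [hcross, mul_comm]⟩
  obtain ⟨a', ha'⟩ : u ^ l ∣ a := (hcop.pow l l).dvd_of_dvd_mul_right ⟨b, hcross.symm⟩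
  simpa [ha u a' ha', hb v b' hb'] using hcross.symm

end PowerFree

open Polynomial IntermediateField

section RealEmbedding

variable {K : Type*} [Field K] (f : K →+* ℝ)

theorem exists_pow_eq_of_pow_eq_neg_one_pow_mul {a t : K} (ha : 0 < f a) {q k : ℕ}
    (hq : q.Prime) (h : t ^ q = (-1) ^ k * a) : ∃ s : K, s ^ q = a := by
  rcases Nat.even_or_odd k with hk | hk
  · exact ⟨t, by rw [h, hk.neg_one_pow, one_mul]⟩
  rcases hq.eq_two_or_odd' with rfl | hq
  · have : f t ^ 2 = -f a := by simpa [hk.neg_one_pow] using congrArg f h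
    nlinarith [sq_nonneg (f t)]
  · exact ⟨-t, by rw [hq.neg_pow, h, hk.neg_one_pow]; ring⟩

variable {E : Type*} [Field E] [Algebra K E] {p : ℕ} {a : K} {x : E}

theorem isIntegral_of_minpoly_eq_X_pow_sub_C (hp : p ≠ 0) (hx : minpoly K x = X ^ p - C a) :
    IsIntegral K x :=
  minpoly.ne_zero_iff.mp (hx ▸ X_pow_sub_C_ne_zero (Nat.pos_of_ne_zero hp) a)

theorem norm_adjoinSimple_gen_of_minpoly_eq_X_pow_sub_C (hp : p ≠ 0)
    (hx : minpoly K x = X ^ p - C a) :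
    Algebra.norm K (AdjoinSimple.gen K x) = (-1) ^ (p + 1) * a := by
  rw [← adjoin.powerBasis_gen (isIntegral_of_minpoly_eq_X_pow_sub_C hp hx),
    Algebra.PowerBasis.norm_gen_eq_coeff_zero_minpoly]
  simp [minpoly_gen, hx, hp.symm, pow_succ]

theorem exists_ringHom_real_adjoinSimple_gen_pos (hp : p ≠ 0) (ha : 0 < f a)
    (hx : minpoly K x = X ^ p - C a) :
    ∃ g : K⟮x⟯ →+* ℝ, 0 < g (AdjoinSimple.gen K x) := by
  let _ : Algebra K ℝ := f.toAlgebra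
  have hint := isIntegral_of_minpoly_eq_X_pow_sub_C hp hx
  set pb := adjoin.powerBasis hint
  set r : ℝ := f a ^ (p⁻¹ : ℝ)
  have hroot : aeval r (minpoly K pb.gen) = 0 := by
    rw [adjoin.powerBasis_gen, minpoly_gen, hx]
    simp [r, Real.rpow_inv_natCast_pow ha.le hp, RingHom.algebraMap_toAlgebra]
  refine ⟨(pb.lift r hroot).toRingHom, ?_⟩
  rw [← adjoin.powerBasis_gen hint]
  exact (pb.lift_gen r hroot).symm ▸ Real.rpow_pos_of_pos ha _

theorem X_pow_sub_C_irreducible_of_map_pos {n : ℕ} (hn : n ≠ 0) (ha : 0 < f a)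
    (h : ∀ p : ℕ, p.Prime → p ∣ n → ∀ b : K, b ^ p ≠ a) :
    Irreducible (X ^ n - C a) := by
  induction n using induction_on_primes generalizing K a with
  | zero => exact absurd rfl hn
  | one => simpa using irreducible_X_sub_C a
  | prime_mul p n hp IH =>
    rw [mul_comm]
    apply X_pow_mul_sub_C_irreducible
      (X_pow_sub_C_irreducible_of_prime hp (h p hp (dvd_mul_right _ _)))
    intro E _ _ x hx
    obtain ⟨g, hg⟩ := exists_ringHom_real_adjoinSimple_gen_pos f hp.ne_zero ha hx
    refine IH g (right_ne_zero_of_mul hn) hg fun q hq hqn b hb => ?_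
    have hnorm : Algebra.norm K b ^ q = (-1) ^ (p + 1) * a := by
      rw [← map_pow, hb, norm_adjoinSimple_gen_of_minpoly_eq_X_pow_sub_C hp.ne_zero hx]
    obtain ⟨s, hs⟩ := exists_pow_eq_of_pow_eq_neg_one_pow_mul f ha hq hnorm
    exact h q hq (dvd_mul_of_dvd_right hqn p) s hs

end RealEmbedding

theorem Polynomial.nextCoeff_X_pow_sub_C {R : Type*} [CommRing R] [Nontrivial R] {d : ℕ}
    (hd : 1 < d) (r : R) : (X ^ d - C r).nextCoeff = 0 := by
  rw [nextCoeff_of_natDegree_pos (by rw [natDegree_X_pow_sub_C]; omega), natDegree_X_pow_sub_C,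
    coeff_sub, coeff_X_pow, coeff_C, if_neg (by omega), if_neg (by omega), sub_zero]

theorem minpoly_eq_X_pow_sub_C_of_minimal {β : ℝ} (hβ : 0 < β) {d : ℕ} (hd : d ≠ 0) {r : ℚ}
    (hr : (r : ℝ) = β ^ d)
    (hmin : ∀ e, 0 < e → e < d → β ^ e ∉ Set.range ((↑) : ℚ → ℝ)) :
    minpoly ℚ β = X ^ d - C r := by
  have hr0 : 0 < r := by exact_mod_cast hr ▸ pow_pos hβ d
  have hroot : aeval β (X ^ d - C r) = 0 := by simp [hr]
  refine (minpoly.eq_of_irreducible_of_monic ?_ hroot (monic_X_pow_sub_C r hd)).symm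
  refine X_pow_sub_C_irreducible_of_map_pos (Rat.castHom ℝ) hd (by simpa using hr0) ?_
  rintro p hp ⟨e, rfl⟩ b hb
  have he : 0 < e := Nat.pos_of_ne_zero (right_ne_zero_of_mul hd)
  have hbe : |(b : ℝ)| = β ^ e := by
    refine (pow_left_inj₀ (abs_nonneg _) (pow_pos hβ e).le hp.ne_zero).mp ?_
    rw [← abs_pow, ← Rat.cast_pow, hb, hr, ← pow_mul, mul_comm, abs_of_pos (pow_pos hβ _)]
  exact hmin e he (lt_mul_left he hp.one_lt) ⟨|b|, by push_cast; exact hbe⟩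

theorem minpoly_nextCoeff_eq_zero_of_pow_eq_ratCast {β : ℝ} (hβ : 0 < β) {n : ℕ} (hn : n ≠ 0)
    {q : ℚ} (hq : (q : ℝ) = β ^ n) (hirr : β ∉ Set.range ((↑) : ℚ → ℝ)) :
    (minpoly ℚ β).nextCoeff = 0 := by
  classical
  have hex : ∃ k, 0 < k ∧ β ^ k ∈ Set.range ((↑) : ℚ → ℝ) := ⟨n, Nat.pos_of_ne_zero hn, q, hq⟩
  obtain ⟨hd, r, hr⟩ := Nat.find_spec hex
  have hd1 : Nat.find hex ≠ 1 := fun h => hirr ⟨r, by rw [hr, h, pow_one]⟩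
  rw [minpoly_eq_X_pow_sub_C_of_minimal hβ hd.ne' hr fun e he hed hmem =>
    Nat.find_min hex hed ⟨he, hmem⟩]
  exact nextCoeff_X_pow_sub_C (by omega) r

theorem eq_zero_of_sum_smul_eq_zero_of_nextCoeff_minpoly {F L ι : Type*} [Field F] [CharZero F]
    [Field L] [Algebra F L] [Fintype ι] {β : ι → L} (hint : ∀ i, IsIntegral F (β i)) {j : ι}
    (hj : β j = 1) (hnext : ∀ i ≠ j, (minpoly F (β i)).nextCoeff = 0) {c : ι → F}
    (hc : ∑ i, c i • β i = 0) : c j = 0 := by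
  let K := adjoin F (Set.range β)
  have : FiniteDimensional F K := finiteDimensional_adjoin fun _ ⟨i, hi⟩ => hi ▸ hint i
  let B (i : ι) : K := ⟨β i, subset_adjoin F _ ⟨i, rfl⟩⟩
  have htrace : ∀ i ≠ j, Algebra.trace F K (B i) = 0 := fun i hi => by
    rw [trace_eq_finrank_mul_minpoly_nextCoeff, minpoly_eq, hnext i hi, neg_zero, mul_zero]
  have hBj : B j = 1 := Subtype.ext hj
  have hsum : ∑ i, c i • B i = 0 := Subtype.ext (by simpa using hc)
  have htr := congrArg (Algebra.trace F K) hsum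
  rw [map_sum, map_zero,
    Finset.sum_eq_single j (fun i _ hi => by rw [map_smul, htrace i hi, smul_zero]) (by simp),
    map_smul, hBj, ← map_one (algebraMap F K), Algebra.trace_algebraMap] at htr
  simpa [Module.finrank_pos.ne'] using htr

theorem besicovitch_linear_independence_general
    (l : ℕ) (m : ℕ) (a : Fin m → ℕ) (c : Fin m → ℤ)
    (hpf : ∀ i, PowerFree l (a i))
    (hinj : Function.Injective a)
    (hsum : ∑ i, (c i : ℝ) * (a i : ℝ) ^ ((1 : ℝ) / l) = 0) :
    ∀ i, c i = 0 := by
  intro j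
  have hl : l ≠ 0 := (hpf j).exponent_ne_zero
  set α : Fin m → ℝ := fun i => (a i : ℝ) ^ ((1 : ℝ) / l)
  have hapos i : (0 : ℝ) < a i := by exact_mod_cast Nat.pos_of_ne_zero (hpf i).ne_zero
  have hαpos i : 0 < α i := Real.rpow_pos_of_pos (hapos i) _
  have hαpow i : α i ^ l = a i := by
    simpa [α, one_div] using Real.rpow_inv_natCast_pow (hapos i).le hl
  set β : Fin m → ℝ := fun i => α i / α j
  have hβpos i : 0 < β i := div_pos (hαpos i) (hαpos j)
  have hβpow i : ((a i / a j : ℚ) : ℝ) = β i ^ l := by simp [β, div_pow, hαpow]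
  have hβirr i (hi : i ≠ j) : β i ∉ Set.range ((↑) : ℚ → ℝ) := by
    rintro ⟨r, hr⟩
    refine hi (hinj ((hpf i).eq_of_pow_eq_div (hpf j) (r := r) ?_))
    exact_mod_cast (hr ▸ hβpow i).symm
  have hβsum : ∑ i, (c i : ℚ) • β i = 0 := by
    simp only [β, Rat.smul_def, Rat.cast_intCast, mul_div_assoc', ← Finset.sum_div]
    exact div_eq_zero_iff.mpr (Or.inl hsum)
  have hcj := eq_zero_of_sum_smul_eq_zero_of_nextCoeff_minpoly (β := β)
    (fun i => IsIntegral.of_pow (Nat.pos_of_ne_zero hl) (hβpow i ▸ isIntegral_algebraMap))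
    (div_self (hαpos j).ne')
    (fun i hi => minpoly_nextCoeff_eq_zero_of_pow_eq_ratCast (hβpos i) hl (hβpow i) (hβirr i hi))
    hβsum
  exact_mod_cast hcj

theorem besicovitch_linear_independence
    (l : ℕ) (hl : 2 ≤ l) (m : ℕ) (a : Fin m → ℕ) (c : Fin m → ℤ)
    (ha2 : ∀ i, 2 ≤ a i) (hpf : ∀ i, PowerFree l (a i))
    (hinj : Function.Injective a)
    (hsum : ∑ i, (c i : ℝ) * (a i : ℝ) ^ ((1 : ℝ) / l) = 0) :
    ∀ i, c i = 0 :=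
  besicovitch_linear_independence_general l m a c hpf hinj hsum
end

section
/- Let k ≥ 2 and ℓ ≥ 1 be integers. If positive integers α_1, ..., α_k, β satisfy α_1^(1/ℓ) + ... + α_k^(1/ℓ) = β^(1/ℓ) (as real numbers), then there exist positive integers a_1, ..., a_k, b, c with c power-ℓ free (or c = 1) such that α_i = c·a_i^ℓ for each i, β = c·b^ℓ, and a_1 + ... + a_k = b. -/
theorem exists_powerFree_mul_pow {l : ℕ} (hl : l ≠ 0) {n : ℕ} (hn : 0 < n) :
    ∃ b c : ℕ, 0 < b ∧ 0 < c ∧ PowerFree l c ∧ n = c * b ^ l := by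
  induction n using Nat.strong_induction_on with
  | _ n ih =>
    by_cases h : PowerFree l n
    · exact ⟨1, n, one_pos, hn, h, by simp⟩
    obtain ⟨e, f, rfl, he⟩ : ∃ e f, n = e ^ l * f ∧ e ≠ 1 := by
      simpa [PowerFree] using h
    have he0 : 0 < e := Nat.pos_of_ne_zero fun h0 => by simp [h0, hl] at hn
    have hf : 0 < f := Nat.pos_of_mul_pos_left hn
    have hfn : f < e ^ l * f := lt_mul_left hf (Nat.one_lt_pow hl (by omega))
    obtain ⟨b, c, hb, hc, hcf, rfl⟩ := ih f hfn hf
    exact ⟨e * b, c, by positivity, hc, hcf, by ring⟩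

theorem PowerFree.exists_natCast_eq {l c : ℕ} (hc : PowerFree l c) {r : ℚ} (hr : 0 ≤ r)
    {n : ℕ} (h : r ^ l * c = n) : ∃ a : ℕ, (a : ℚ) = r := by
  have hden : r.den ^ l ∣ c := by
    have hcross : r.num ^ l * c = n * (r.den : ℤ) ^ l := by
      have : (r.num : ℚ) ^ l * c = n * (r.den : ℚ) ^ l := by
        rw [← Rat.mul_den_eq_num, mul_pow, ← h]
        ring
      exact_mod_cast this
    have hcop : IsCoprime ((r.den : ℤ) ^ l) (r.num ^ l) :=
      (Int.isCoprime_iff_gcd_eq_one.mpr (by rw [Int.gcd_comm]; exact r.reduced)).pow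
    exact Int.natCast_dvd_natCast.mp <| by
      simpa using hcop.dvd_of_dvd_mul_left ⟨n, by rw [hcross, mul_comm]⟩
  obtain ⟨d, hd⟩ := hden
  have h1 : r.den = 1 := hc _ d hd
  refine ⟨r.num.toNat, ?_⟩
  conv_rhs => rw [← Rat.coe_int_num_of_den_eq_one h1]
  exact_mod_cast congrArg (Int.cast (R := ℚ)) (Int.toNat_of_nonneg (Rat.num_nonneg.mpr hr))

theorem sameRay_of_norm_sum_eq_sum_norm {E ι : Type*} [NormedAddCommGroup E] [NormedSpace ℝ E]
    [StrictConvexSpace ℝ E] {s : Finset ι} {z : ι → E}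
    (h : ‖∑ j ∈ s, z j‖ = ∑ j ∈ s, ‖z j‖) {i : ι} (hi : i ∈ s) :
    SameRay ℝ (z i) (∑ j ∈ s, z j) := by
  classical
  rw [← Finset.add_sum_erase s z hi, ← Finset.add_sum_erase s _ hi] at h
  rw [← Finset.add_sum_erase s z hi]
  have hadd : ‖z i + ∑ j ∈ s.erase i, z j‖ = ‖z i‖ + ‖∑ j ∈ s.erase i, z j‖ :=
    le_antisymm (norm_add_le _ _) (by linarith [norm_sum_le (s.erase i) z])
  exact (SameRay.refl (z i)).add_right (sameRay_iff_norm_add.mpr hadd)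

theorem Complex.div_sum_eq_of_norm_sum_eq_sum_norm {ι : Type*} [Fintype ι] {z : ι → ℂ}
    (h : ‖∑ j, z j‖ = ∑ j, ‖z j‖) (i : ι) :
    z i / ∑ j, z j = ‖z i‖ / ‖∑ j, z j‖ := by
  have hray := sameRay_iff_norm_smul_eq.mp (sameRay_of_norm_sum_eq_sum_norm h (Finset.mem_univ i))
  rcases eq_or_ne (∑ j, z j) 0 with h0 | h0
  · simp [h0]
  rw [div_eq_div_iff h0 (by simpa using h0)]
  simpa [Complex.real_smul, mul_comm] using hray.symm

theorem IntermediateField.norm_algEquiv_apply_of_pow_eq_algebraMap {F E : Type*} [Field F]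
    [NormedField E] [Algebra F E] {K : IntermediateField F E} (σ : K ≃ₐ[F] K) {t : K} {l : ℕ}
    (hl : l ≠ 0) {a : F} (ht : t ^ l = algebraMap F K a) :
    ‖((σ t : K) : E)‖ = ‖(t : E)‖ := by
  have hpow : σ t ^ l = t ^ l := by rw [← map_pow, ht, AlgEquiv.commutes]
  refine (pow_left_inj₀ (norm_nonneg _) (norm_nonneg _) hl).mp ?_
  rw [← norm_pow, ← norm_pow, ← IntermediateField.coe_pow, hpow, IntermediateField.coe_pow]

theorem Complex.ofReal_mem_algebraicClosure_of_pow_eq_ratCast {l : ℕ} (hl : l ≠ 0) {t : ℝ}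
    {a : ℚ} (ha : t ^ l = a) : (t : ℂ) ∈ algebraicClosure ℚ ℂ := by
  refine mem_algebraicClosure_iff.mpr (IsAlgebraic.of_pow (Nat.pos_of_ne_zero hl) ?_)
  rw [← Complex.ofReal_pow, ha, Complex.ofReal_ratCast, ← eq_ratCast (algebraMap ℚ ℂ)]
  exact isAlgebraic_algebraMap a

open IntermediateField Complex in
theorem exists_ratCast_eq_div_of_sum_eq {ι : Type*} [Fintype ι] {l : ℕ} (hl : l ≠ 0)
    {x : ι → ℝ} {y : ℝ} (hx : ∀ j, 0 ≤ x j)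
    (hxl : ∀ j, ∃ a : ℚ, x j ^ l = a) (hyl : ∃ b : ℚ, y ^ l = b)
    (hsum : ∑ j, x j = y) (i : ι) : ∃ q : ℚ, (q : ℝ) = x i / y := by
  let K := algebraicClosure ℚ ℂ
  choose a ha using hxl
  obtain ⟨b, hb⟩ := hyl
  let X : ι → K := fun j => ⟨x j, ofReal_mem_algebraicClosure_of_pow_eq_ratCast hl (ha j)⟩
  let Y : K := ⟨y, ofReal_mem_algebraicClosure_of_pow_eq_ratCast hl hb⟩
  have hX_pow (j : ι) : X j ^ l = algebraMap ℚ K (a j) :=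
    Subtype.ext (by simpa [X] using congrArg ofReal (ha j))
  have hY_pow : Y ^ l = algebraMap ℚ K b := Subtype.ext (by simpa [Y] using congrArg ofReal hb)
  have hsumXY : ∑ j, X j = Y := Subtype.ext (by simp [X, Y, ← hsum])
  obtain ⟨q, hq⟩ := (InfiniteGalois.mem_range_algebraMap_iff_fixed (X i / Y)).mpr fun σ => by
    have hnorm_X : ∀ j, ‖((σ (X j) : K) : ℂ)‖ = x j := fun j => by
      rw [norm_algEquiv_apply_of_pow_eq_algebraMap σ hl (hX_pow j)]
      exact Complex.norm_of_nonneg (hx j)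
    have hnorm_Y : ‖((σ Y : K) : ℂ)‖ = y := by
      rw [norm_algEquiv_apply_of_pow_eq_algebraMap σ hl hY_pow]
      exact Complex.norm_of_nonneg (hsum ▸ Finset.sum_nonneg fun j _ => hx j)
    have hσsum : ∑ j, ((σ (X j) : K) : ℂ) = (σ Y : K) := by
      rw [← hsumXY, map_sum, IntermediateField.coe_sum]
    have hdiv := div_sum_eq_of_norm_sum_eq_sum_norm
      (z := fun j => ((σ (X j) : K) : ℂ)) (by simp only [hσsum, hnorm_Y, hnorm_X, hsum]) i
    apply Subtype.ext
    simp only [hσsum, hnorm_X, hnorm_Y] at hdiv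
    rw [map_div₀, IntermediateField.coe_div, IntermediateField.coe_div, hdiv]
  refine ⟨q, ?_⟩
  have hqC : ((q : ℝ) : ℂ) = (x i : ℂ) / (y : ℂ) := by
    simpa [X, Y] using congrArg Subtype.val hq
  exact_mod_cast hqC

theorem solutions_fractional_general (k l : ℕ) (hl : 1 ≤ l)
    (α : Fin k → ℕ) (β : ℕ) (hα : ∀ i, 0 < α i) (hβ : 0 < β)
    (heq : ∑ i, ((α i : ℝ)) ^ ((1 : ℝ) / l) = (β : ℝ) ^ ((1 : ℝ) / l)) :
    ∃ (a : Fin k → ℕ) (b c : ℕ), (∀ i, 0 < a i) ∧ 0 < b ∧ 0 < c ∧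
      PowerFree l c ∧ (∀ i, α i = c * (a i) ^ l) ∧ β = c * b ^ l ∧
      ∑ i, a i = b := by
  have hl0 : l ≠ 0 := by omega
  have root_pow (n : ℕ) : ((n : ℝ) ^ ((1 : ℝ) / l)) ^ l = n := by
    rw [one_div, Real.rpow_inv_natCast_pow n.cast_nonneg hl0]
  obtain ⟨b, c, hb, hc, hcf, rfl⟩ := exists_powerFree_mul_pow hl0 hβ
  choose q hq using exists_ratCast_eq_div_of_sum_eq hl0 (fun i => by positivity)
    (fun i => ⟨α i, by rw [root_pow, Rat.cast_natCast]⟩)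
    ⟨(c * b ^ l : ℕ), by rw [root_pow, Rat.cast_natCast]⟩ heq
  have hq0 (i : Fin k) : 0 < q i := Rat.cast_pos.mp (by rw [hq i]; have := hα i; positivity)
  have hq_sum : ∑ i, q i = 1 := by
    have : ∑ i, (q i : ℝ) = 1 := by
      rw [Finset.sum_congr rfl fun i _ => hq i, ← Finset.sum_div, heq, div_self (by positivity)]
    exact_mod_cast this
  have hα_eq (i : Fin k) : (q i * b) ^ l * c = α i := by
    have : ((q i : ℝ) * b) ^ l * c = α i := by
      rw [mul_pow, hq i, div_pow, root_pow, root_pow]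
      field_simp
      push_cast; ring
    exact_mod_cast this
  choose a ha using fun i => hcf.exists_natCast_eq (by have := hq0 i; positivity) (hα_eq i)
  refine ⟨a, b, c, fun i => ?_, hb, hc, hcf, fun i => ?_, rfl, ?_⟩
  · exact_mod_cast (ha i ▸ by have := hq0 i; positivity : (0 : ℚ) < a i)
  · exact_mod_cast (by rw [← hα_eq i, ← ha i]; ring : (α i : ℚ) = c * a i ^ l)
  · have : ∑ i, (a i : ℚ) = b := by simp only [ha, ← Finset.sum_mul, hq_sum, one_mul]
    exact_mod_cast this

theorem solutions_fractional (k l : ℕ) (hk : 2 ≤ k) (hl : 1 ≤ l)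
    (α : Fin k → ℕ) (β : ℕ) (hα : ∀ i, 0 < α i) (hβ : 0 < β)
    (heq : ∑ i, ((α i : ℝ)) ^ ((1 : ℝ) / l) = (β : ℝ) ^ ((1 : ℝ) / l)) :
    ∃ (a : Fin k → ℕ) (b c : ℕ), (∀ i, 0 < a i) ∧ 0 < b ∧ 0 < c ∧
      PowerFree l c ∧ (∀ i, α i = c * (a i) ^ l) ∧ β = c * b ^ l ∧
      ∑ i, a i = b :=
  solutions_fractional_general k l hl α β hα hβ heq
end

section
/- If a, b, c are natural numbers with √a + √b = √c (as real numbers) and a, b, c ≥ 1, then there exist positive integers d, p, q with d squarefree (or d = 1) such that a = d·p², b = d·q², and c = d·(p+q)². -/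
/-!
Squaring gives `2√(ab) = c - a - b`, so `√(ab)` is rational and `ab` is a perfect square.
Write `a = d p²` with `d` squarefree; then `ab = p² (d b)` forces `d b` to be a square, and as `d`
is squarefree, `b = d q²`. Finally `√c = √a + √b = (p + q) √d`.
-/

section UniqueFactorization

variable {R : Type*} [CommMonoidWithZero R] [UniqueFactorizationMonoid R]

theorem IsSquare.of_sq_mul {p n : R} (hp : p ≠ 0) (h : IsSquare (p ^ 2 * n)) : IsSquare n := by
  obtain ⟨k, hk⟩ := h
  obtain ⟨m, rfl⟩ : p ∣ k :=
    (UniqueFactorizationMonoid.pow_dvd_pow_iff_dvd two_ne_zero).mp ⟨n, by rw [pow_two, ← hk]⟩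
  exact ⟨m, mul_left_cancel₀ (pow_ne_zero 2 hp) (by rw [hk, mul_mul_mul_comm, ← pow_two])⟩

theorem Squarefree.exists_eq_mul_sq_of_isSquare_mul {d n : R} (hd : Squarefree d)
    (h : IsSquare (d * n)) : ∃ q, n = d * q ^ 2 := by
  nontriviality R
  obtain ⟨m, hm⟩ := h
  obtain ⟨q, rfl⟩ : d ∣ m := (hd.dvd_pow_iff_dvd two_ne_zero).mp ⟨n, by rw [pow_two, ← hm]⟩
  exact ⟨q, mul_left_cancel₀ hd.ne_zero (by rw [hm, pow_two]; ac_rfl)⟩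

end UniqueFactorization

theorem Nat.isSquare_mul_of_sqrt_add_sqrt_eq_sqrt {a b c : ℕ} (h : √a + √b = √c) :
    IsSquare (a * b) := by
  by_contra hab
  have hirr : Irrational √((a * b : ℕ) : ℝ) := irrational_sqrt_natCast_iff.mpr hab
  have hsq : √((a * b : ℕ) : ℝ) = ((c - a - b : ℚ) : ℝ) / 2 := by
    have hc : (√a + √b) ^ 2 = c := by rw [h, Real.sq_sqrt c.cast_nonneg]
    rw [add_sq, Real.sq_sqrt a.cast_nonneg, Real.sq_sqrt b.cast_nonneg, mul_assoc,
      ← Real.sqrt_mul a.cast_nonneg] at hc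
    push_cast
    linarith
  exact hirr ⟨(c - a - b) / 2, by rw [hsq]; push_cast; ring⟩

theorem Real.sqrt_natCast_mul_sq (d p : ℕ) : √((d * p ^ 2 : ℕ) : ℝ) = p * √d := by
  push_cast
  rw [Real.sqrt_mul d.cast_nonneg, Real.sqrt_sq p.cast_nonneg, mul_comm]

theorem sqrt_add_sqrt_eq_sqrt_general (a b c : ℕ) (ha : 1 ≤ a) (hb : 1 ≤ b)
    (h : Real.sqrt a + Real.sqrt b = Real.sqrt c) :
    ∃ d p q : ℕ, 0 < d ∧ 0 < p ∧ 0 < q ∧ Squarefree d ∧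
      a = d * p ^ 2 ∧ b = d * q ^ 2 ∧ c = d * (p + q) ^ 2 := by
  obtain ⟨d, p, hd, hp, rfl, hsf⟩ := Nat.sq_mul_squarefree_of_pos ha
  have hdb : IsSquare (d * b) := by
    refine .of_sq_mul hp.ne' ?_
    simpa only [mul_assoc] using Nat.isSquare_mul_of_sqrt_add_sqrt_eq_sqrt h
  obtain ⟨q, rfl⟩ := hsf.exists_eq_mul_sq_of_isSquare_mul hdb
  have hq : 0 < q := Nat.pos_of_ne_zero (by rintro rfl; simp at hb)
  refine ⟨d, p, q, hd, hp, hq, hsf, mul_comm _ _, rfl, ?_⟩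
  have hsqrt : √(c : ℝ) = √((d * (p + q) ^ 2 : ℕ) : ℝ) := by
    rw [← h, mul_comm, Real.sqrt_natCast_mul_sq, Real.sqrt_natCast_mul_sq,
      Real.sqrt_natCast_mul_sq]
    push_cast; ring
  exact_mod_cast (Real.sqrt_inj c.cast_nonneg (Nat.cast_nonneg _)).mp hsqrt

theorem sqrt_add_sqrt_eq_sqrt (a b c : ℕ) (ha : 1 ≤ a) (hb : 1 ≤ b) (hc : 1 ≤ c)
    (h : Real.sqrt a + Real.sqrt b = Real.sqrt c) :
    ∃ d p q : ℕ, 0 < d ∧ 0 < p ∧ 0 < q ∧ Squarefree d ∧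
      a = d * p ^ 2 ∧ b = d * q ^ 2 ∧ c = d * (p + q) ^ 2 :=
  sqrt_add_sqrt_eq_sqrt_general a b c ha hb h
end

section
/- Let p be an odd prime and k = p − 1. There do not exist positive integers a_1, ..., a_k, each belonging to {1, 2, ..., k−1} ∪ {k+1} (i.e., each at most k+1 and not equal to k), such that 1/a_1 + 1/a_2 + ... + 1/a_k = 1. -/
theorem no_unit_fraction_solution_prime (p : ℕ) (hp : p.Prime) (hodd : Odd p)
    (k : ℕ) (hk : k = p - 1) :
    ¬ ∃ a : Fin k → ℕ, (∀ i, 1 ≤ a i ∧ a i ≤ k + 1 ∧ a i ≠ k) ∧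
      ∑ i, (1 : ℚ) / (a i) = 1 := by
  rintro ⟨a, ha, hsum⟩
  have hp2 : p ≠ 2 := by rintro rfl; exact (by decide : ¬ Odd 2) hodd
  have hp3 : 3 ≤ p := by have := hp.two_le; omega
  have hk2 : 2 ≤ k := by omega
  have hkp : k + 1 = p := by omega
  set S := Finset.univ.filter (fun i => a i = k + 1) with hS
  by_cases hSe : S = ∅
  · -- all a i ≤ k - 1, so the sum is too big
    have hle : ∀ i, (a i : ℚ) ≤ (k : ℚ) - 1 := by
      intro i
      have h1 := ha i
      have h2 : a i ≠ k + 1 := by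
        intro h
        exact (Finset.ne_empty_of_mem (Finset.mem_filter.mpr ⟨Finset.mem_univ i, h⟩)) hSe
      have h3 : a i + 1 ≤ k := by omega
      have : ((a i : ℚ) + 1) ≤ (k : ℚ) := by exact_mod_cast h3
      linarith
    have hpos : (0:ℚ) < (k:ℚ) - 1 := by
      have : (2:ℚ) ≤ (k:ℚ) := by exact_mod_cast hk2
      linarith
    have hbound : ∀ i ∈ (Finset.univ : Finset (Fin k)), 1/((k:ℚ)-1) ≤ 1/(a i : ℚ) := by
      intro i _
      apply one_div_le_one_div_of_le
      · exact_mod_cast (ha i).1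
      · exact hle i
    have hcard : (Finset.univ : Finset (Fin k)).card = k := by simp
    have h := Finset.card_nsmul_le_sum Finset.univ _ _ hbound
    rw [hsum, hcard, nsmul_eq_mul] at h
    have hk' : (k:ℚ) / ((k:ℚ)-1) ≤ 1 := by
      rw [div_eq_mul_one_div]; exact h
    rw [div_le_one hpos] at hk'
    linarith
  · have hSne : S.Nonempty := Finset.nonempty_iff_ne_empty.mpr hSe
    set T := Finset.univ.filter (fun i => ¬ a i = k + 1) with hT
    set m := S.card with hm
    set N := ∏ i ∈ T, a i with hN
    have haT : ∀ i ∈ T, 1 ≤ a i ∧ a i ≤ k - 1 := by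
      intro i hi
      have h1 := ha i
      have h2 : a i ≠ k + 1 := (Finset.mem_filter.mp hi).2
      omega
    have hNpos : 0 < N := Finset.prod_pos (fun i hi => (haT i hi).1)
    have hN0 : (N:ℚ) ≠ 0 := by exact_mod_cast hNpos.ne'
    set M := ∑ i ∈ T, N / a i with hM
    have hdvd : ∀ i ∈ T, a i ∣ N := fun i hi => Finset.dvd_prod_of_mem a hi
    have hMcast : (M:ℚ) = ∑ i ∈ T, (N:ℚ) / (a i : ℚ) := by
      rw [hM, Nat.cast_sum]
      exact Finset.sum_congr rfl fun i hi => Nat.cast_div (hdvd i hi)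
        (Nat.cast_ne_zero.mpr (by have := (haT i hi).1; omega))
    have hmulT : (N:ℚ) * ∑ i ∈ T, (1:ℚ)/(a i : ℚ) = (M:ℚ) := by
      rw [Finset.mul_sum, hMcast]
      exact Finset.sum_congr rfl fun i _ => mul_one_div _ _
    have hTsum : ∑ i ∈ T, (1:ℚ)/(a i : ℚ) = (M:ℚ) / N :=
      (eq_div_iff hN0).mpr (by rw [mul_comm]; exact hmulT)
    have hSsum : ∑ i ∈ S, (1:ℚ)/(a i : ℚ) = (m:ℚ) / p := by
      have h : ∀ i ∈ S, (1:ℚ)/(a i : ℚ) = 1/(p:ℚ) := by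
        intro i hi
        rw [(Finset.mem_filter.mp hi).2, hkp]
      rw [Finset.sum_congr rfl h, Finset.sum_const, nsmul_eq_mul, mul_one_div]
    have hsplit := Finset.sum_filter_add_sum_filter_not Finset.univ
      (fun i => a i = k + 1) (fun i => (1:ℚ)/(a i : ℚ))
    rw [← hS, ← hT, hSsum, hTsum, hsum] at hsplit
    have hp0 : (p:ℚ) ≠ 0 := by exact_mod_cast hp.pos.ne'
    have key : (m:ℚ) * N + M * p = p * N := by
      field_simp at hsplit
      linarith
    have keyN : m * N + M * p = p * N := by exact_mod_cast key
    have hpN : ¬ p ∣ N := by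
      intro h
      rcases (hp.prime.dvd_finset_prod_iff a).mp h with ⟨i, hi, hdi⟩
      have h1 := Nat.le_of_dvd (by have := (haT i hi).1; omega) hdi
      have h2 := (haT i hi).2
      omega
    have hmN : p ∣ m * N := by
      have h3 : m * N = p * N - M * p := Nat.eq_sub_of_add_eq keyN
      rw [h3]
      exact Nat.dvd_sub (dvd_mul_right p N) (dvd_mul_left p M)
    have hm1 : 1 ≤ m := Finset.card_pos.mpr hSne
    have hmk : m ≤ k := by
      have := Finset.card_le_univ S
      simpa using this
    rcases (Nat.Prime.dvd_mul hp).mp hmN with h | h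
    · have := Nat.le_of_dvd (by omega) h
      omega
    · exact hpN h
end

section
/- Let k ≥ 2 and m = −ℓ ≥ 1 with 2·k^m ≥ (k+1)^m. If positive integers a_1 ≤ a_2 ≤ ... ≤ a_k satisfy a_1^(-1/m) + ... + a_k^(-1/m) = 1 as real numbers, then each a_i^(1/m) is a rational number, and hence each a_i is a perfect m-th power. -/
/-!
Put `x i = a i ^ (-1/m)`. A `ℚ`-embedding `φ` of `ℚ(x 1, …, x k)` into `ℂ` sends `x i` to an
`m`-th root of `1 / a i`, so `‖φ (x i)‖ = x i`, while `∑ φ (x i) = 1 = ∑ ‖φ (x i)‖`.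
Equality in the triangle inequality forces `φ (x i) = x i`. An algebraic number fixed by every
embedding is rational, since its separable minimal polynomial has only one root; and a rational
`m`-th root of an integer is an integer.
-/

open Polynomial IntermediateField

theorem Complex.eq_norm_of_sum_eq_sum_norm {ι : Type*} (s : Finset ι) (z : ι → ℂ)
    (h : ∑ i ∈ s, z i = ((∑ i ∈ s, ‖z i‖ : ℝ) : ℂ)) (i : ι) (hi : i ∈ s) : z i = ‖z i‖ := by
  have hre : ∑ i ∈ s, (z i).re = ∑ i ∈ s, ‖z i‖ := by
    simpa only [Complex.re_sum, Complex.ofReal_re] using congrArg Complex.re h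
  have hi' : (z i).re = ‖z i‖ :=
    (Finset.sum_eq_sum_iff_of_le fun j _ ↦ Complex.re_le_norm (z j)).mp hre i hi
  exact (Complex.eq_re_of_ofReal_le (Complex.re_eq_norm.mp hi')).trans (congrArg _ hi')

theorem Complex.eq_of_pow_eq_of_sum_eq {ι : Type*} (s : Finset ι) {m : ℕ} (hm : m ≠ 0)
    (w : ι → ℂ) (x : ι → ℝ) (hx : ∀ i ∈ s, 0 ≤ x i) (hpow : ∀ i ∈ s, w i ^ m = (x i : ℂ) ^ m)
    (hsum : ∑ i ∈ s, w i = ∑ i ∈ s, (x i : ℂ)) (i : ι) (hi : i ∈ s) : w i = x i := by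
  have hnorm : ∀ i ∈ s, ‖w i‖ = x i := fun i hi ↦ by
    have := congrArg norm (hpow i hi)
    rwa [norm_pow, norm_pow, Complex.norm_real, Real.norm_of_nonneg (hx i hi),
      pow_left_inj₀ (norm_nonneg _) (hx i hi) hm] at this
  have hwi := Complex.eq_norm_of_sum_eq_sum_norm s w (by
    rw [hsum, Finset.sum_congr rfl hnorm]; push_cast; rfl) i hi
  rw [hwi, hnorm i hi]

theorem mem_range_algebraMap_of_forall_algHom_eq {F E : Type*} [Field F] [PerfectField F]
    [Field E] [Algebra F E] [IsAlgClosed E] {S : Set E} (hS : ∀ s ∈ S, IsIntegral F s)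
    {x : E} (hx : x ∈ S) (h : ∀ φ : adjoin F S →ₐ[F] E, φ ⟨x, subset_adjoin F S hx⟩ = x) :
    x ∈ (algebraMap F E).range := by
  have hroots : ∀ r : E, aeval r (minpoly F x) = 0 → r = x := fun r hr ↦ by
    obtain ⟨φ, hφ⟩ := exists_algHom_adjoin_of_splits_of_aeval
      (fun s hs ↦ ⟨hS s hs, IsAlgClosed.splits _⟩) (subset_adjoin F S hx) hr
    rw [← hφ, h]
  have hcard : Fintype.card ((minpoly F x).rootSet E) = 1 :=
    Fintype.card_eq_one_iff.mpr
      ⟨⟨x, mem_rootSet.mpr ⟨minpoly.ne_zero (hS x hx), minpoly.aeval F x⟩⟩,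
        fun ⟨r, hr⟩ ↦ Subtype.ext (hroots r (mem_rootSet.mp hr).2)⟩
  rw [← minpoly.natDegree_eq_one_iff, ← hcard, card_rootSet_eq_natDegree
    (PerfectField.separable_of_irreducible (minpoly.irreducible (hS x hx)))
    (IsAlgClosed.splits _)]

theorem Real.exists_rat_eq_of_sum_eq_rat_of_pow_eq_rat {ι : Type*} [Fintype ι] {m : ℕ}
    (hm : m ≠ 0) (x : ι → ℝ) (hx : ∀ i, 0 ≤ x i) (hpow : ∀ i, ∃ q : ℚ, x i ^ m = q) {c : ℚ}
    (hsum : ∑ i, x i = c) (i : ι) : ∃ q : ℚ, x i = q := by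
  choose q hq using hpow
  set S := Set.range fun i ↦ (x i : ℂ)
  have hmem : ∀ i, (x i : ℂ) ∈ adjoin ℚ S := fun i ↦ subset_adjoin ℚ S ⟨i, rfl⟩
  have hint : ∀ s ∈ S, IsIntegral ℚ s := by
    rintro _ ⟨i, rfl⟩
    refine IsIntegral.of_pow (Nat.pos_of_ne_zero hm) ?_
    rw [← Complex.ofReal_pow, hq i, Complex.ofReal_ratCast]
    exact isIntegral_algebraMap
  have hfix : ∀ φ : adjoin ℚ S →ₐ[ℚ] ℂ, ∀ i, φ ⟨x i, hmem i⟩ = x i := by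
    intro φ
    refine fun i ↦ Complex.eq_of_pow_eq_of_sum_eq Finset.univ hm (fun i ↦ φ ⟨x i, hmem i⟩) x
      (fun i _ ↦ hx i) (fun i _ ↦ ?_) ?_ i (Finset.mem_univ i)
    · have hpowK : (⟨x i, hmem i⟩ : adjoin ℚ S) ^ m = algebraMap ℚ _ (q i) := by
        ext; simp [← Complex.ofReal_pow, hq i]
      rw [← map_pow, hpowK, AlgHom.commutes, ← Complex.ofReal_pow, hq i]; simp
    · have hsumK : ∑ i, (⟨x i, hmem i⟩ : adjoin ℚ S) = algebraMap ℚ _ c := by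
        ext; simp [← Complex.ofReal_sum, hsum]
      rw [← map_sum, hsumK, AlgHom.commutes, ← Complex.ofReal_sum, hsum]; simp
  obtain ⟨r, hr⟩ := mem_range_algebraMap_of_forall_algHom_eq hint ⟨i, rfl⟩ (hfix · i)
  exact ⟨r, Complex.ofReal_injective (by simpa [eq_comm] using hr)⟩

theorem roots_rational_of_reciprocal_sum_one_general (k m : ℕ) (hm : 1 ≤ m)
    (a : Fin k → ℕ)
    (heq : ∑ i, (((a i : ℝ)) ^ ((1 : ℝ) / m))⁻¹ = 1) :
    ∀ i, (∃ q : ℚ, ((a i : ℝ)) ^ ((1 : ℝ) / m) = (q : ℝ)) ∧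
      ∃ n : ℕ, a i = n ^ m := by
  have hm0 : m ≠ 0 := Nat.one_le_iff_ne_zero.mp hm
  have hpow : ∀ i, ((a i : ℝ) ^ ((1 : ℝ) / m)) ^ m = a i := fun i ↦ by
    rw [one_div, Real.rpow_inv_natCast_pow (Nat.cast_nonneg _) hm0]
  intro i
  obtain ⟨q, hq⟩ := Real.exists_rat_eq_of_sum_eq_rat_of_pow_eq_rat hm0
    (fun i ↦ ((a i : ℝ) ^ ((1 : ℝ) / m))⁻¹) (fun i ↦ by positivity)
    (fun i ↦ ⟨(a i : ℚ)⁻¹, by rw [inv_pow, hpow]; push_cast; rfl⟩)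
    (c := 1) (by simpa using heq) i
  have hroot : (a i : ℝ) ^ ((1 : ℝ) / m) = (q⁻¹ : ℚ) := by
    rw [Rat.cast_inv, ← hq, inv_inv]
  refine ⟨⟨q⁻¹, hroot⟩, ?_⟩
  obtain ⟨n, hn⟩ : ∃ n : ℤ, (a i : ℝ) ^ ((1 : ℝ) / m) = n := by
    by_contra h
    exact (irrational_nrt_of_notint_nrt m (a i) (by simpa using hpow i) h (by omega)).ne_rat _
      hroot
  lift n to ℕ using by exact_mod_cast hn ▸ Real.rpow_nonneg (Nat.cast_nonneg _) _
  have hcast : (a i : ℝ) = (n : ℝ) ^ m := by rw [← hpow i, hn, Int.cast_natCast]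
  exact ⟨n, by exact_mod_cast hcast⟩

theorem roots_rational_of_reciprocal_sum_one (k m : ℕ) (hk : 2 ≤ k) (hm : 1 ≤ m)
    (hkm : (k + 1) ^ m ≤ 2 * k ^ m)
    (a : Fin k → ℕ) (ha : ∀ i, 0 < a i)
    (hmono : ∀ i j : Fin k, i ≤ j → a i ≤ a j)
    (heq : ∑ i, (((a i : ℝ)) ^ ((1 : ℝ) / m))⁻¹ = 1) :
    ∀ i, (∃ q : ℚ, ((a i : ℝ)) ^ ((1 : ℝ) / m) = (q : ℝ)) ∧
      ∃ n : ℕ, a i = n ^ m :=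
  roots_rational_of_reciprocal_sum_one_general k m hm a heq
end
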